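/- arXiv:0809.0423 — 2 statements merged into one kernel-verified Lean document; each statement's English description precedes it below -/
import Mathlib

section
/- Let α > 0 and K > 0. For every y ∈ ℝ with |y| ≤ K one has ((e^{−αK} + αK − 1)/(αK²))·y² ≤ g_α(y) ≤ ((e^{αK} − αK − 1)/(αK²))·y², where both constants are strictly positive. -/
/-- `g α y = (exp(α y) − α y − 1)/α`. -/
noncomputable def g (α y : ℝ) : ℝ := (Real.exp (α * y) - α * y - 1) / α

/-!
Taylor's formula with integral remainder gives `exp x - x - 1 = x² ∫₀¹ (1 - t) e^{t x} dt`, and the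
integral is monotone in `x`. Hence for `|x| ≤ c` the quotient `(exp x - x - 1)/x²` lies between its
values at `-c` and `c`; substituting `x = α y`, `c = α K` gives both bounds.
-/

open Real

noncomputable def expRemainder (x : ℝ) : ℝ := ∫ t in (0 : ℝ)..1, (1 - t) * exp (t * x)

lemma intervalIntegrable_one_sub_mul_exp (x : ℝ) :
    IntervalIntegrable (fun t : ℝ => (1 - t) * exp (t * x)) MeasureTheory.volume 0 1 :=
  (by fun_prop : Continuous fun t : ℝ => (1 - t) * exp (t * x)).intervalIntegrable 0 1

lemma exp_sub_sub_one_eq_sq_mul_expRemainder (x : ℝ) :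
    exp x - x - 1 = x ^ 2 * expRemainder x := by
  have hderiv : ∀ t ∈ Set.uIcc (0 : ℝ) 1,
      HasDerivAt (fun t => x * (1 - t) * exp (t * x) + exp (t * x))
        (x ^ 2 * ((1 - t) * exp (t * x))) t := by
    intro t _
    have hexp : HasDerivAt (fun t : ℝ => exp (t * x)) (exp (t * x) * x) t :=
      (hasDerivAt_mul_const x).exp
    exact (((((hasDerivAt_id' t).const_sub 1).const_mul x).fun_mul hexp).fun_add hexp).congr_deriv
      (by ring)
  have hint := intervalIntegral.integral_eq_sub_of_hasDerivAt hderiv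
    ((intervalIntegrable_one_sub_mul_exp x).const_mul (x ^ 2))
  rw [intervalIntegral.integral_const_mul] at hint
  rw [expRemainder, hint]
  simp only [sub_self, mul_zero, zero_mul, one_mul, sub_zero, mul_one, exp_zero, zero_add]
  ring

lemma monotone_expRemainder : Monotone expRemainder := by
  intro x y hxy
  refine intervalIntegral.integral_mono_on zero_le_one (intervalIntegrable_one_sub_mul_exp x)
    (intervalIntegrable_one_sub_mul_exp y) fun t ht => ?_
  have hexp : exp (t * x) ≤ exp (t * y) := exp_le_exp.mpr (mul_le_mul_of_nonneg_left hxy ht.1)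
  exact mul_le_mul_of_nonneg_left hexp (sub_nonneg.mpr ht.2)

theorem stmt0 (α K : ℝ) (hα : 0 < α) (hK : 0 < K) (y : ℝ) (hy : |y| ≤ K) :
    0 < (Real.exp (-(α * K)) + α * K - 1) / (α * K ^ 2) ∧
    0 < (Real.exp (α * K) - α * K - 1) / (α * K ^ 2) ∧
    (Real.exp (-(α * K)) + α * K - 1) / (α * K ^ 2) * y ^ 2 ≤ g α y ∧
    g α y ≤ (Real.exp (α * K) - α * K - 1) / (α * K ^ 2) * y ^ 2 := by
  have hc : 0 < α * K := mul_pos hα hK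
  have hlow_pos : 0 < exp (-(α * K)) + α * K - 1 := by
    linarith [add_one_lt_exp (neg_ne_zero.mpr hc.ne')]
  have hup_pos : 0 < exp (α * K) - α * K - 1 := by linarith [add_one_lt_exp hc.ne']
  have hlow : (exp (-(α * K)) + α * K - 1) / (α * K ^ 2) = α * expRemainder (-(α * K)) := by
    have h := exp_sub_sub_one_eq_sq_mul_expRemainder (-(α * K))
    rw [sub_neg_eq_add] at h
    rw [h]; field_simp
  have hup : (exp (α * K) - α * K - 1) / (α * K ^ 2) = α * expRemainder (α * K) := by
    rw [exp_sub_sub_one_eq_sq_mul_expRemainder]; field_simp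
  have hg : g α y = α * expRemainder (α * y) * y ^ 2 := by
    rw [g, exp_sub_sub_one_eq_sq_mul_expRemainder]; field_simp
  have hαy : |α * y| ≤ α * K := by
    rw [abs_mul, abs_of_pos hα]; exact mul_le_mul_of_nonneg_left hy hα.le
  refine ⟨by positivity, by positivity, ?_, ?_⟩
  · rw [hlow, hg]
    gcongr
    exact monotone_expRemainder (neg_le_of_abs_le hαy)
  · rw [hup, hg]
    gcongr
    exact monotone_expRemainder (le_of_abs_le hαy)
end

section
/- Define the auxiliary generator f̃ by f̃(z, u) = f(z − θ/α, u) − f(−θ/α, 0) for z ∈ ℝ and u ∈ L²(n) ∩ L^∞(n) (where 0 denotes the zero function). Then f̃(0, 0) = 0 and, for all z and u as above, −θz ≤ f̃(z, u) ≤ θ²/α + α z² + ∫ g_α(u(x)) dn(x). -/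
open MeasureTheory

/-- `u ∈ L²(n) ∩ L^∞(n)`: measurable, square integrable and essentially bounded. -/
def MemL2Linf (n : Measure ℝ) (u : ℝ → ℝ) : Prop :=
  Measurable u ∧ Integrable (fun x => (u x) ^ 2) n ∧ ∃ K : ℝ, ∀ᵐ x ∂n, |u x| ≤ K

/-- The generator
`f(z,u) = inf_{π ∈ 𝒞} [ (α/2)(πσ − (z + θ/α))² + ∫ g_α(u(x) − πβ(x)) dn(x) ] − θz − θ²/(2α)`. -/
noncomputable def gen (α θ σ : ℝ) (β : ℝ → ℝ) (𝒞 : Set ℝ) (n : Measure ℝ)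
    (z : ℝ) (u : ℝ → ℝ) : ℝ :=
  sInf ((fun π => α / 2 * (π * σ - (z + θ / α)) ^ 2
      + ∫ x, g α (u x - π * β x) ∂n) '' 𝒞) - θ * z - θ ^ 2 / (2 * α)

/-- The auxiliary generator `f̃(z,u) = f(z − θ/α, u) − f(−θ/α, 0)`. -/
noncomputable def tgen (α θ σ : ℝ) (β : ℝ → ℝ) (𝒞 : Set ℝ) (n : Measure ℝ)
    (z : ℝ) (u : ℝ → ℝ) : ℝ :=
  gen α θ σ β 𝒞 n (z - θ / α) u - gen α θ σ β 𝒞 n (-(θ / α)) (fun _ => 0)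


lemma g_nonneg' {α : ℝ} (hα : 0 < α) (y : ℝ) : 0 ≤ g α y := by
  have h := Real.add_one_le_exp (α * y)
  unfold g
  apply div_nonneg _ hα.le
  linarith

theorem stmt8 (α θ σ : ℝ) (hα : 0 < α) (n : Measure ℝ) [SigmaFinite n]
    (β : ℝ → ℝ) (hβ : MemL2Linf n β)
    (𝒞 : Set ℝ) (h𝒞c : IsCompact 𝒞) (h𝒞ne : 𝒞.Nonempty) (h𝒞0 : (0:ℝ) ∈ 𝒞) :
    tgen α θ σ β 𝒞 n 0 (fun _ => 0) = 0 ∧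
    ∀ (z : ℝ) (u : ℝ → ℝ), MemL2Linf n u →
      -θ * z ≤ tgen α θ σ β 𝒞 n z u ∧
      tgen α θ σ β 𝒞 n z u ≤ θ ^ 2 / α + α * z ^ 2 + ∫ x, g α (u x) ∂n := by

  have hnn : ∀ (z' : ℝ) (u' : ℝ → ℝ) (π : ℝ),
      0 ≤ α / 2 * (π * σ - (z' + θ / α)) ^ 2 + ∫ x, g α (u' x - π * β x) ∂n := by
    intro z' u' π
    have h1 : 0 ≤ ∫ x, g α (u' x - π * β x) ∂n :=
      integral_nonneg fun x => g_nonneg' hα _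
    positivity
  have hsnn : ∀ (z' : ℝ) (u' : ℝ → ℝ),
      0 ≤ sInf ((fun π => α / 2 * (π * σ - (z' + θ / α)) ^ 2
        + ∫ x, g α (u' x - π * β x) ∂n) '' 𝒞) := by
    intro z' u'
    apply Real.sInf_nonneg
    rintro x ⟨π, -, rfl⟩
    exact hnn z' u' π
  have hbdd : ∀ (z' : ℝ) (u' : ℝ → ℝ),
      BddBelow ((fun π => α / 2 * (π * σ - (z' + θ / α)) ^ 2
        + ∫ x, g α (u' x - π * β x) ∂n) '' 𝒞) := by
    intro z' u'
    refine ⟨0, ?_⟩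
    rintro x ⟨π, -, rfl⟩
    exact hnn z' u' π
  have hle : ∀ (z' : ℝ) (u' : ℝ → ℝ),
      sInf ((fun π => α / 2 * (π * σ - (z' + θ / α)) ^ 2
        + ∫ x, g α (u' x - π * β x) ∂n) '' 𝒞)
      ≤ α / 2 * (0 * σ - (z' + θ / α)) ^ 2 + ∫ x, g α (u' x - 0 * β x) ∂n := by
    intro z' u'
    exact csInf_le (hbdd z' u') ⟨0, h𝒞0, rfl⟩
  have hzero : sInf ((fun π => α / 2 * (π * σ - (-(θ/α) + θ / α)) ^ 2
      + ∫ x, g α ((fun _ : ℝ => (0:ℝ)) x - π * β x) ∂n) '' 𝒞) = 0 := by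
    refine le_antisymm ?_ (hsnn _ _)
    have := hle (-(θ/α)) (fun _ => 0)
    simpa [g, Real.exp_zero] using this
  constructor
  · simp [tgen]
  · intro z u hu
    constructor
    · have h1 := hsnn (z - θ/α + θ/α - θ/α) u
      unfold tgen gen
      rw [hzero]
      have h2 : z - θ/α + θ/α = z := by ring
      have h1' := hsnn (z - θ/α) u
      nlinarith [h1']
    · unfold tgen gen
      rw [hzero]
      have h2 := hle (z - θ/α) u
      have h3 : z - θ/α + θ/α = z := by ring
      rw [h3] at h2
      have h4 : ∀ x : ℝ, u x - 0 * β x = u x := by intro x; ring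
      simp only [h4] at h2
      have h5 : 0 ≤ θ^2 / α := by positivity
      have h6 : α/2 * (0*σ - z)^2 ≤ α * z^2 := by nlinarith [sq_nonneg z]
      rw [h3]
      have e1 : θ * (z - θ/α) = θ * z - θ^2/α := by rw [mul_sub, sq, mul_div_assoc]
      have e2 : θ * -(θ/α) = -(θ^2/α) := by rw [mul_neg, sq, mul_div_assoc]
      have hmul : 0 ≤ θ^2 + α*(θ*z) + (α*z)^2/2 := by nlinarith [sq_nonneg (θ + α*z/2)]
      have key : 0 ≤ θ^2/α + α/2*z^2 + θ*z := by
        have hd := div_nonneg hmul hα.le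
        have : (θ^2 + α*(θ*z) + (α*z)^2/2)/α = θ^2/α + α/2*z^2 + θ*z := by
          field_simp; ring
        linarith [this ▸ hd]
      have h7 : α/2*(0*σ - z)^2 = α/2*z^2 := by ring
      rw [e1, e2]
      linarith [h2, key, h7.le, h7.ge]
end
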